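/- Let L be a normal incline and let A be an n×n completely positive matrix over L with n ≥ 3. If either every left almost principal 2×2 submatrix of A satisfies A i k * A k j ≤ A i j * A k k (for all i < k, j < k, i ≠ j), or every right almost principal 2×2 submatrix of A satisfies A i l * A k i ≤ A i i * A k l (for all i < k, i < l, k ≠ l), then the CP-rank of A is at most n: there exists an n×n matrix B over L with A = B * Bᵀ. -/

import Mathlib

/-!
As in a Cholesky decomposition, column `l` of the factor `C` consists of quotients `w i` by
`√(A l l)` of `A i l` for `i ≥ l` and of `0` for `i < l`, chosen so that `w i * w j ≤ A i j`
for all `i, j`.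
Then every term of `(C * Cᵀ) i j` is at most `A i j` and the term `l = min i j` equals it, and
addition is the join. Such quotients exist because multiplication by `d` is injective below `d`
(by the LI and unique square root properties), which allows shrinking any quotient until it passes
finitely many tests `z * N ≤ M`; the almost principal conditions, completed by symmetry and
Cauchy–Schwarz, are what these tests require.
-/

open Matrix

theorem Finset.sum_le_of_forall_le {ι α : Type*} [IdemSemiring α] {s : Finset ι} {f : ι → α}
    {a : α} (h : ∀ i ∈ s, f i ≤ a) : ∑ i ∈ s, f i ≤ a :=
  Finset.sum_induction f (· ≤ a) (fun _ _ => add_le) zero_le h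

namespace Incline

variable {L : Type*} [IdemCommSemiring L]

theorem eq_of_mul_self_eq (hsq : ∀ x : L, ∃! c : L, c * c = x) {a b : L}
    (h : a * a = b * b) : a = b :=
  (hsq (b * b)).unique h rfl

theorem add_mul_self_eq (hAG : ∀ x y : L, x * y ≤ x * x + y * y) (a b : L) :
    (a + b) * (a + b) = a * a + b * b := by
  have hexp : (a + b) * (a + b) = a * b + (a * a + b * b) := by
    rw [← add_idem (a * b)]; ring
  rw [hexp, add_eq_right_iff_le]
  exact hAG a b

theorem le_of_mul_self_le_mul_self (hsq : ∀ x : L, ∃! c : L, c * c = x)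
    (hAG : ∀ x y : L, x * y ≤ x * x + y * y) {a b : L} (h : a * a ≤ b * b) : a ≤ b := by
  rw [← add_eq_right_iff_le] at h ⊢
  exact eq_of_mul_self_eq hsq (by rw [add_mul_self_eq hAG, h])

theorem le_of_mul_le_mul_of_le (hLI : ∀ x y : L, x ≤ y → ∃ z, x = y * z)
    (hsq : ∀ x : L, ∃! c : L, c * c = x) {a b d : L} (ha : a ≤ d) (hb : b ≤ d)
    (h : a * d ≤ b * d) : a ≤ b := by
  set u := a + b
  obtain ⟨τ, hτ⟩ := hLI u d (add_le ha hb)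
  obtain ⟨β, hβ⟩ := hLI b d hb
  have hud : u * d = b * d := by rw [add_mul, add_eq_right_iff_le.mpr h]
  have hu : u * u = b * u := by
    calc u * u = τ * (u * d) := by rw [hτ]; ring
      _ = b * u := by rw [hud, hτ]; ring
  have hbb : b * b = b * u := by
    calc b * b = β * (b * d) := by rw [hβ]; ring
      _ = b * u := by rw [← hud, hβ]; ring
  rw [← add_eq_right_iff_le]
  exact eq_of_mul_self_eq hsq (hu.trans hbb.symm)

theorem exists_le_mul_eq_mul_le (habs : ∀ a b : L, a * b ≤ a)
    (hLI : ∀ x y : L, x ≤ y → ∃ z, x = y * z) (hsq : ∀ x : L, ∃! c : L, c * c = x)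
    {x y z₀ N M : L} (hz₀ : y * z₀ = x) (h : x * N ≤ y * M) :
    ∃ z ≤ z₀, y * z = x ∧ z * N ≤ M := by
  set D := x + M + z₀ * N
  -- `z := z₀ * κ` with `κ` a quotient of `x + M` by `D`
  obtain ⟨κ, hκ⟩ := hLI (x + M) D le_self_add
  have hxN : x * (z₀ * N) ≤ x * M :=
    calc x * (z₀ * N) = z₀ * (x * N) := by ring
      _ ≤ z₀ * (y * M) := mul_le_mul_right h z₀
      _ = x * M := by rw [← hz₀]; ring
  have hxD : x ≤ D := le_self_add.trans le_self_add
  have hMD : M ≤ D := le_add_self.trans le_self_add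
  refine ⟨z₀ * κ, habs z₀ κ, ?_, ?_⟩
  · rw [← mul_assoc, hz₀]
    refine le_antisymm (habs x κ) (le_of_mul_le_mul_of_le hLI hsq hxD ((habs x κ).trans hxD) ?_)
    calc x * D = x * x + x * M + x * (z₀ * N) := by ring
      _ ≤ x * x + x * M := add_le le_rfl (hxN.trans le_add_self)
      _ = x * κ * D := by rw [mul_assoc, mul_comm κ, ← hκ]; ring
  · have hκD : z₀ * N * κ ≤ D :=
      calc z₀ * N * κ ≤ D * κ := mul_le_mul_left le_add_self κ
        _ ≤ D := hκ ▸ le_self_add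
    rw [mul_right_comm]
    refine le_of_mul_le_mul_of_le hLI hsq hκD hMD ?_
    calc z₀ * N * κ * D = x * (z₀ * N) + z₀ * N * M := by rw [mul_assoc, mul_comm κ, ← hκ]; ring
      _ ≤ M * D := add_le (hxN.trans (by rw [mul_comm]; exact mul_le_mul_right hxD M))
          (by rw [mul_comm]; exact mul_le_mul_right le_add_self M)

theorem exists_le_mul_eq_forall_mul_le (habs : ∀ a b : L, a * b ≤ a)
    (hLI : ∀ x y : L, x ≤ y → ∃ z, x = y * z) (hsq : ∀ x : L, ∃! c : L, c * c = x)
    {ι : Type*} (s : Finset ι) (N M : ι → L) {x y z₀ : L} (hz₀ : y * z₀ = x)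
    (h : ∀ j ∈ s, x * N j ≤ y * M j) :
    ∃ z ≤ z₀, y * z = x ∧ ∀ j ∈ s, z * N j ≤ M j := by
  classical
  induction s using Finset.induction_on with
  | empty => exact ⟨z₀, le_rfl, hz₀, by simp⟩
  | insert a s ha ih =>
    obtain ⟨z', hz'z₀, hz', hs⟩ := ih fun j hj => h j (Finset.mem_insert_of_mem hj)
    obtain ⟨z, hzz', hz, ha⟩ := exists_le_mul_eq_mul_le habs hLI hsq hz' (h a (s.mem_insert_self a))
    refine ⟨z, hzz'.trans hz'z₀, hz, Finset.forall_mem_insert _ _ _ |>.mpr ⟨ha, fun j hj => ?_⟩⟩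
    exact (mul_le_mul_left hzz' (N j)).trans (hs j hj)

/-- Arbitrary quotients are shrunk twice: first against the `x j`, then against the results of
the first shrinking. -/
theorem exists_quotient_family (habs : ∀ a b : L, a * b ≤ a)
    (hLI : ∀ x y : L, x ≤ y → ∃ z, x = y * z) (hsq : ∀ x : L, ∃! c : L, c * c = x)
    {ι : Type*} [Fintype ι] {y : L} {x : ι → L} {c : ι → ι → L} (hx : ∀ i, x i ≤ y)
    (hxx : ∀ i j, x i * x j ≤ y * y * c i j) :
    ∃ w : ι → L, ∀ i, y * w i = x i ∧ ∀ j, w i * w j ≤ c i j := by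
  have shrink : ∀ {u t : ι → L} {d : ι → ι → L}, (∀ i, y * u i = x i) →
      (∀ i j, x i * t j ≤ y * d i j) →
      ∃ w : ι → L, ∀ i, w i ≤ u i ∧ y * w i = x i ∧ ∀ j, w i * t j ≤ d i j := by
    intro u t d hu h
    choose w hwu hw ht using fun i =>
      exists_le_mul_eq_forall_mul_le habs hLI hsq Finset.univ t (d i) (hu i) fun j _ => h i j
    exact ⟨w, fun i => ⟨hwu i, hw i, fun j => ht i j (Finset.mem_univ j)⟩⟩
  choose z hz using fun i => hLI (x i) y (hx i)
  obtain ⟨v, hv⟩ := shrink (u := z) (t := x) (d := fun i j => y * c j i) (fun i => (hz i).symm)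
    fun i j => by rw [← mul_assoc, mul_comm (x i)]; exact hxx j i
  obtain ⟨w, hw⟩ := shrink (u := v) (t := v) (d := c) (fun i => (hv i).2.1)
    fun i j => by rw [mul_comm]; exact (hv j).2.2 i
  exact ⟨w, fun i => ⟨(hw i).2.1, fun j => (mul_le_mul_right (hw j).1 _).trans ((hw i).2.2 j)⟩⟩

theorem mul_le_sum_mul_self (hAG : ∀ x y : L, x * y ≤ x * x + y * y) {m : Type*} [Fintype m]
    (f : m → L) (k l : m) : f k * f l ≤ ∑ t, f t * f t :=
  have single (t₀ : m) : f t₀ * f t₀ ≤ ∑ t, f t * f t :=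
    Finset.single_le_sum (f := fun t => f t * f t) (fun _ _ => zero_le) (Finset.mem_univ t₀)
  (hAG _ _).trans (add_le (single k) (single l))

theorem mul_transpose_self_apply_mul_self_le (hAG : ∀ x y : L, x * y ≤ x * x + y * y)
    {ι m : Type*} [Fintype m] (B : Matrix ι m L) (i j : ι) :
    (B * Bᵀ) i j * (B * Bᵀ) i j ≤ (B * Bᵀ) i i * (B * Bᵀ) j j := by
  simp only [mul_apply, transpose_apply]
  rw [Finset.sum_mul_sum]
  refine Finset.sum_le_of_forall_le fun k _ => Finset.sum_le_of_forall_le fun l _ => ?_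
  calc B i k * B j k * (B i l * B j l) = (B i k * B i l) * (B j k * B j l) := by ring
    _ ≤ _ := mul_le_mul' (mul_le_sum_mul_self hAG (B i) k l) (mul_le_sum_mul_self hAG (B j) k l)

theorem pivot_le_of_lt {ι : Type*} [LinearOrder ι] {A : Matrix ι ι L} (hA : A.IsSymm)
    (hcs : ∀ i j, A i j * A i j ≤ A i i * A j j)
    (h : ∀ l i j, l < i → l < j → i ≠ j → A i l * A j l ≤ A l l * A i j)
    {l i j : ι} (hi : l ≤ i) (hj : l ≤ j) : A i l * A j l ≤ A l l * A i j := by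
  rcases hi.eq_or_lt with rfl | hi
  · rw [hA.apply l j]
  rcases hj.eq_or_lt with rfl | hj
  · rw [mul_comm]
  rcases eq_or_ne i j with rfl | hij
  · rw [mul_comm (A l l)]; exact hcs i l
  exact h l i j hi hj hij

theorem exists_eq_mul_transpose_of_pivot (habs : ∀ a b : L, a * b ≤ a)
    (hLI : ∀ x y : L, x ≤ y → ∃ z, x = y * z) (hsq : ∀ x : L, ∃! c : L, c * c = x)
    (hAG : ∀ x y : L, x * y ≤ x * x + y * y) {ι : Type*} [Fintype ι] [LinearOrder ι]
    {A : Matrix ι ι L} (hA : A.IsSymm)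
    (hpiv : ∀ l i j, l ≤ i → l ≤ j → A i l * A j l ≤ A l l * A i j) :
    ∃ C : Matrix ι ι L, A = C * Cᵀ := by
  have column : ∀ l, ∃ w : ι → L, (∀ i, l ≤ i → w l * w i = A i l) ∧ ∀ i j, w i * w j ≤ A i j := by
    intro l
    obtain ⟨y, hy, -⟩ := hsq (A l l)
    obtain ⟨w, hw⟩ := exists_quotient_family habs hLI hsq (y := y) (c := A)
      (x := fun i => if l ≤ i then A i l else 0)
      (fun i => by
        split_ifs with hi
        · refine le_of_mul_self_le_mul_self hsq hAG ?_
          rw [hy]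
          exact (hpiv l i i hi hi).trans (habs _ _)
        · exact zero_le)
      (fun i j => by
        split_ifs with hi hj hj
        · rw [hy]; exact hpiv l i j hi hj
        all_goals simp)
    have hwl : w l = y := by
      have hyw : y * w l = y * y := by rw [(hw l).1, if_pos le_rfl, hy]
      have hwy : w l ≤ y := le_of_mul_self_le_mul_self hsq hAG (hy ▸ (hw l).2 l)
      exact le_antisymm hwy
        (le_of_mul_le_mul_of_le hLI hsq le_rfl hwy (by rw [mul_comm (w l), hyw]))
    exact ⟨w, fun i hi => by rw [hwl, (hw i).1, if_pos hi], fun i j => (hw i).2 j⟩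
  choose w hw hwA using column
  refine ⟨of fun i l => w l i, ?_⟩
  ext i j
  simp only [mul_apply, of_apply, transpose_apply]
  refine le_antisymm ?_ (Finset.sum_le_of_forall_le fun l _ => hwA l i j)
  have single (l : ι) : w l i * w l j ≤ ∑ l, w l i * w l j :=
    Finset.single_le_sum (f := fun l => w l i * w l j) (fun _ _ => zero_le) (Finset.mem_univ l)
  rcases le_total i j with hij | hji
  · calc A i j = w i i * w i j := by rw [hw i j hij, hA.apply]
      _ ≤ _ := single i
  · calc A i j = w j i * w j j := by rw [mul_comm, hw j i hji]
      _ ≤ _ := single j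

end Incline

open Incline

theorem stmt_14_general {L : Type*} [CommSemiring L]
    (hidem : ∀ a : L, a + a = a)
    (habs : ∀ a b : L, a + a * b = a)
    (hLI : ∀ x y : L, x + y = y → ∃ z : L, x = y * z)
    (hsq : ∀ x : L, ∃! c : L, c * c = x)
    (hAG : ∀ x y : L, x * y + (x * x + y * y) = x * x + y * y)
    (n : ℕ) (A : Matrix (Fin n) (Fin n) L)
    (hcp : ∃ m : ℕ, ∃ B : Matrix (Fin n) (Fin m) L, A = B * Bᵀ)
    (h : (∀ i j k : Fin n, i < k → j < k → i ≠ j →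
            A i k * A k j + A i j * A k k = A i j * A k k) ∨
         (∀ i k l : Fin n, i < k → i < l → k ≠ l →
            A i l * A k i + A i i * A k l = A i i * A k l)) :
    ∃ B : Matrix (Fin n) (Fin n) L, A = B * Bᵀ := by
  -- ordered by `x ≤ y ↔ x + y = y`, so that `hLI` and `hAG` already speak about `≤`
  let _ : IdemCommSemiring L := { IdemSemiring.ofSemiring hidem, ‹CommSemiring L› with }
  have habs' : ∀ a b : L, a * b ≤ a := fun a b => add_eq_left_iff_le.mp (habs a b)
  obtain ⟨m, B, hB⟩ := hcp
  have hA : A.IsSymm := by rw [hB, IsSymm, transpose_mul, transpose_transpose]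
  have hcs : ∀ i j, A i j * A i j ≤ A i i * A j j := by
    rw [hB]; exact mul_transpose_self_apply_mul_self_le hAG B
  rcases h with hL | hR
  · -- the left condition is the right one for the reversed order on the indices
    have hpiv : ∀ l i j : Fin n, i < l → j < l → i ≠ j → A i l * A j l ≤ A l l * A i j := by
      intro l i j hi hj hij
      have := hL i j l hi hj hij
      rwa [← hA.apply j l, mul_comm (A l l)]
    exact exists_eq_mul_transpose_of_pivot habs' hLI hsq hAG (ι := (Fin n)ᵒᵈ) hA
      fun l i j hi hj => pivot_le_of_lt (ι := (Fin n)ᵒᵈ) hA hcs hpiv hi hj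
  · have hpiv : ∀ l i j : Fin n, l < i → l < j → i ≠ j → A i l * A j l ≤ A l l * A i j := by
      intro l i j hi hj hij
      have := hR l i j hi hj hij
      rwa [mul_comm, ← hA.apply j l]
    exact exists_eq_mul_transpose_of_pivot habs' hLI hsq hAG hA
      fun l i j hi hj => pivot_le_of_lt hA hcs hpiv hi hj

/-- If `A` is an n×n completely positive matrix (n ≥ 3) over a
normal incline such that either all its left almost principal 2×2 submatrices
or all its right almost principal 2×2 submatrices have `det⁺ ≥ det⁻`, then the
CP-rank of `A` is at most n. -/
theorem stmt_14 {L : Type*} [CommSemiring L]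
    (hidem : ∀ a : L, a + a = a)
    (habs : ∀ a b : L, a + a * b = a)
    (hLI : ∀ x y : L, x + y = y → ∃ z : L, x = y * z)
    (hsq : ∀ x : L, ∃! c : L, c * c = x)
    (hAG : ∀ x y : L, x * y + (x * x + y * y) = x * x + y * y)
    (n : ℕ) (hn : 3 ≤ n) (A : Matrix (Fin n) (Fin n) L)
    (hcp : ∃ m : ℕ, ∃ B : Matrix (Fin n) (Fin m) L, A = B * Bᵀ)
    (h : (∀ i j k : Fin n, i < k → j < k → i ≠ j →
            A i k * A k j + A i j * A k k = A i j * A k k) ∨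
         (∀ i k l : Fin n, i < k → i < l → k ≠ l →
            A i l * A k i + A i i * A k l = A i i * A k l)) :
    ∃ B : Matrix (Fin n) (Fin n) L, A = B * Bᵀ :=
  stmt_14_general hidem habs hLI hsq hAG n A hcp h
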